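/- For all integers a ≥ 2 and k ≥ 2, the number k·l_a belongs to the additive submonoid of ℕ generated by {l_a + l_0, l_a + l_1, …, l_a + l_a}. -/

import Mathlib

/-- The Lucas sequence: l 0 = 2, l 1 = 1, l (n+2) = l (n+1) + l n. -/
def lucas : ℕ → ℕ
  | 0 => 2
  | 1 => 1
  | n + 2 => lucas (n + 1) + lucas n

/-- The modified (monotone) Lucas sequence: l̃ 0 = 1, l̃ 1 = 2, l̃ n = l n for n ≥ 2. -/
def ltil : ℕ → ℕ
  | 0 => 1
  | 1 => 2
  | n + 2 => lucas (n + 2)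

/-- β x : minimal number of summands in a representation of x as a sum of
modified Lucas numbers (with repetitions allowed). -/
noncomputable def beta (x : ℕ) : ℕ :=
  sInf {s : ℕ | ∃ k : ℕ, ∃ b : ℕ → ℕ,
    x = ∑ i ∈ Finset.range (k + 1), b i * ltil i ∧ s = ∑ i ∈ Finset.range (k + 1), b i}

/-- γ x : the greatest k with l̃ k ≤ x (for x ≥ 1). -/
noncomputable def gamma (x : ℕ) : ℕ := sSup {k : ℕ | ltil k ≤ x}

/-- S a : the additive submonoid of ℕ generated by {l_a} ∪ {l_a + l_n : n ∈ ℕ}. -/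
def Sset (a : ℕ) : AddSubmonoid ℕ :=
  AddSubmonoid.closure ({lucas a} ∪ {x : ℕ | ∃ n : ℕ, x = lucas a + lucas n})

/-- T a : the additive submonoid of ℕ generated by {l_a + l_n : n ∈ ℕ}. -/
def Tset (a : ℕ) : AddSubmonoid ℕ :=
  AddSubmonoid.closure {x : ℕ | ∃ n : ℕ, x = lucas a + lucas n}

/-- Every `k ≥ 2` is a sum of `2`s and `3`s. -/
theorem AddSubmonoid.nsmul_mem_of_two_nsmul_mem_of_three_nsmul_mem {M : Type*} [AddMonoid M]
    (S : AddSubmonoid M) {x : M} (h2 : 2 • x ∈ S) (h3 : 3 • x ∈ S) {k : ℕ} (hk : 2 ≤ k) :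
    k • x ∈ S := by
  obtain ⟨q, rfl | rfl⟩ := Nat.even_or_odd' k
  · rw [mul_nsmul]
    exact S.nsmul_mem h2 q
  · obtain ⟨m, rfl⟩ : ∃ m, q = m + 1 := ⟨q - 1, by omega⟩
    rw [show 2 * (m + 1) + 1 = 2 * m + 3 by ring, add_nsmul, mul_nsmul]
    exact S.add_mem (S.nsmul_mem h2 m) h3

theorem lucas_add_two (n : ℕ) : lucas (n + 2) = lucas (n + 1) + lucas n := rfl

theorem three_mul_lucas_add_two (n : ℕ) :
    3 * lucas (n + 2) = (lucas (n + 2) + lucas (n + 1)) + (lucas (n + 2) + lucas n) := by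
  rw [lucas_add_two]
  ring

theorem mul_lucas_mem (a k : ℕ) (ha : 2 ≤ a) (hk : 2 ≤ k) :
    k * lucas a ∈
      AddSubmonoid.closure
        ((((Finset.range (a + 1)).image fun i => lucas a + lucas i : Finset ℕ)) : Set ℕ) := by
  set S := AddSubmonoid.closure
    ((((Finset.range (a + 1)).image fun i => lucas a + lucas i : Finset ℕ)) : Set ℕ)
  have generator_mem {i : ℕ} (hi : i ≤ a) : lucas a + lucas i ∈ S :=
    AddSubmonoid.subset_closure (by simpa using ⟨i, by omega, rfl⟩)
  obtain ⟨n, rfl⟩ : ∃ n, a = n + 2 := ⟨a - 2, by omega⟩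
  have two_mem : 2 • lucas (n + 2) ∈ S := by
    rw [two_nsmul]
    exact generator_mem le_rfl
  have three_mem : 3 • lucas (n + 2) ∈ S := by
    rw [smul_eq_mul, three_mul_lucas_add_two]
    exact S.add_mem (generator_mem (by omega)) (generator_mem (by omega))
  simpa using S.nsmul_mem_of_two_nsmul_mem_of_three_nsmul_mem two_mem three_mem hk
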